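/- Let Q₃ be a positive definite quadratic form on symmetric 3×3 matrices, depending only on the symmetric part, and A symmetric positive definite. For each F ∈ ℝ^{2×2}, the minimization min{ Q₃(A^{−1}(F* + c⊗e₃)A^{−1}) : c ∈ ℝ³ } has a unique minimizer c(F) ∈ ℝ³ among symmetric completions, and the map F ↦ c(F) is linear in F. -/

import Mathlib

open Matrix

/-- The `3×3` matrix with principal `2×2` minor equal to `F` and all other entries `0`. -/
def starExt (F : Matrix (Fin 2) (Fin 2) ℝ) : Matrix (Fin 3) (Fin 3) ℝ :=
  Matrix.of fun i j =>
    if hi : (i : ℕ) < 2 then if hj : (j : ℕ) < 2 then F ⟨i, hi⟩ ⟨j, hj⟩ else 0 else 0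

/-- The matrix `c ⊗ e₃`, i.e. the `3×3` matrix whose third column is `c` and whose
other columns vanish. -/
def colE3 (c : Fin 3 → ℝ) : Matrix (Fin 3) (Fin 3) ℝ :=
  Matrix.of fun i j => if j = 2 then c i else 0

/-! Let `B` be the symmetric bilinear form of `Q₃`. Since `Q₃` only sees symmetric parts and
`c ⊗ e₃ + e₃ ⊗ c ≠ 0` for `c ≠ 0`, the form `P(c, d) = B(A⁻¹(c ⊗ e₃)A⁻¹, A⁻¹(d ⊗ e₃)A⁻¹)` is
positive definite on `ℝ³`. Completing the square with respect to `P`, the minimizer is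
`c(F) = -P⁻¹ B(A⁻¹F*A⁻¹, A⁻¹(· ⊗ e₃)A⁻¹)`, which is linear in `F`, and the energy at `c` exceeds
the minimum by `P(c - c(F), c - c(F))`. -/

theorem apply_add_add_of_apply_eq_zero {R M : Type*} [CommRing R] [AddCommGroup M] [Module R M]
    {B : M →ₗ[R] M →ₗ[R] R} (hB : ∀ x y, B x y = B y x) {x y : M} (h : B x y = 0) :
    B (x + y) (x + y) = B x x + B y y := by
  simp only [map_add, LinearMap.add_apply]
  rw [hB y x, h]
  ring

section Minimizer

variable {𝕜 V W : Type*} [Field 𝕜] [LinearOrder 𝕜]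
  [AddCommGroup V] [Module 𝕜 V] [AddCommGroup W] [Module 𝕜 W] {B : W →ₗ[𝕜] W →ₗ[𝕜] 𝕜}

theorem exists_linearMap_apply_add_orthogonal [FiniteDimensional 𝕜 V] (φ : V →ₗ[𝕜] W)
    (hφ : ∀ v, v ≠ 0 → 0 < B (φ v) (φ v)) :
    ∃ L : W →ₗ[𝕜] V, ∀ X u, B (X + φ (L X)) (φ u) = 0 := by
  set P : LinearMap.BilinForm 𝕜 V := B.compl₁₂ φ φ
  have hP : P.Nondegenerate :=
    ⟨fun v hv => by_contra fun h => (hφ v h).ne' (hv v),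
      fun v hv => by_contra fun h => (hφ v h).ne' (hv v)⟩
  refine ⟨-((P.toDual hP).symm.toLinearMap ∘ₗ B.compl₂ φ), fun X u => ?_⟩
  have hdual : B (φ ((P.toDual hP).symm (B.compl₂ φ X))) (φ u) = B X (φ u) :=
    P.apply_toDual_symm_apply _ u
  simp only [LinearMap.neg_apply, LinearMap.comp_apply, LinearEquiv.coe_coe, map_neg,
    map_add, LinearMap.add_apply, hdual, add_neg_cancel]

theorem exists_linearMap_unique_minimizer [IsStrictOrderedRing 𝕜] [FiniteDimensional 𝕜 V]
    (hB : ∀ x y, B x y = B y x) (φ : V →ₗ[𝕜] W) (hφ : ∀ v, v ≠ 0 → 0 < B (φ v) (φ v)) :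
    ∃ L : W →ₗ[𝕜] V, ∀ X,
      (∀ c, B (X + φ (L X)) (X + φ (L X)) ≤ B (X + φ c) (X + φ c)) ∧
      (∀ c, (∀ c', B (X + φ c) (X + φ c) ≤ B (X + φ c') (X + φ c')) → c = L X) := by
  obtain ⟨L, hL⟩ := exists_linearMap_apply_add_orthogonal φ hφ
  refine ⟨L, fun X => ?_⟩
  have hsplit : ∀ c, B (X + φ c) (X + φ c)
      = B (X + φ (L X)) (X + φ (L X)) + B (φ (c - L X)) (φ (c - L X)) := fun c => by
    rw [← apply_add_add_of_apply_eq_zero hB (hL X (c - L X)), map_sub, add_add_sub_cancel]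
  refine ⟨fun c => ?_, fun c hc => by_contra fun hne => ?_⟩
  · rcases eq_or_ne (c - L X) 0 with h | h
    · rw [sub_eq_zero.mp h]
    · linarith [hsplit c, hφ _ h]
  · linarith [hc (L X), hsplit c, hφ _ (sub_ne_zero.mpr hne)]

end Minimizer

theorem pos_of_add_transpose_ne_zero {n : Type*} {Q : Matrix n n ℝ → ℝ}
    (hsym : ∀ X : Matrix n n ℝ, Q X = Q ((1/2 : ℝ) • (X + Xᵀ)))
    (hposdef : ∀ X : Matrix n n ℝ, Xᵀ = X → X ≠ 0 → 0 < Q X)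
    {X : Matrix n n ℝ} (hX : X + Xᵀ ≠ 0) : 0 < Q X := by
  rw [hsym]
  refine hposdef _ ?_ (smul_ne_zero (by norm_num) hX)
  rw [transpose_smul, transpose_add, transpose_transpose, add_comm]

theorem mul_mul_add_transpose_of_transpose_eq {n R : Type*} [Fintype n] [CommRing R]
    {P : Matrix n n R} (hP : Pᵀ = P) (X : Matrix n n R) :
    P * X * P + (P * X * P)ᵀ = P * (X + Xᵀ) * P := by
  rw [transpose_mul, transpose_mul, hP, Matrix.mul_add, Matrix.add_mul, Matrix.mul_assoc P Xᵀ]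

theorem colE3_add_transpose_ne_zero {c : Fin 3 → ℝ} (hc : c ≠ 0) :
    colE3 c + (colE3 c)ᵀ ≠ 0 := by
  contrapose! hc
  funext i
  have h := congrFun (congrFun hc i) 2
  fin_cases i <;> simpa [colE3] using h

def starExtₗ : Matrix (Fin 2) (Fin 2) ℝ →ₗ[ℝ] Matrix (Fin 3) (Fin 3) ℝ where
  toFun := starExt
  map_add' F G := by
    ext i j
    simp only [starExt, of_apply, Matrix.add_apply]
    split_ifs <;> simp
  map_smul' r F := by
    ext i j
    simp only [starExt, of_apply, Matrix.smul_apply, RingHom.id_apply, smul_eq_mul]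
    split_ifs <;> simp

def colE3ₗ : (Fin 3 → ℝ) →ₗ[ℝ] Matrix (Fin 3) (Fin 3) ℝ where
  toFun := colE3
  map_add' c d := by ext i j; by_cases h : j = 2 <;> simp [colE3, h]
  map_smul' r c := by ext i j; by_cases h : j = 2 <;> simp [colE3, h]

/-- For a quadratic form `Q₃`, positive definite on symmetric matrices and depending
only on the symmetric part, and `A` symmetric positive definite, the minimization
`min{Q₃(A⁻¹(F* + c⊗e₃)A⁻¹) : c ∈ ℝ³}` has a unique minimizer `c(F)`, and
`F ↦ c(F)` is linear. -/
theorem unique_linear_minimizer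
    (Q3 : Matrix (Fin 3) (Fin 3) ℝ → ℝ)
    (hquad : ∃ B : Matrix (Fin 3) (Fin 3) ℝ →ₗ[ℝ] Matrix (Fin 3) (Fin 3) ℝ →ₗ[ℝ] ℝ,
      (∀ X Y, B X Y = B Y X) ∧ ∀ X, Q3 X = B X X)
    (hsym : ∀ X : Matrix (Fin 3) (Fin 3) ℝ, Q3 X = Q3 ((1/2 : ℝ) • (X + Xᵀ)))
    (hposdef : ∀ X : Matrix (Fin 3) (Fin 3) ℝ, Xᵀ = X → X ≠ 0 → 0 < Q3 X)
    (A : Matrix (Fin 3) (Fin 3) ℝ) (hA : A.PosDef) :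
    ∃ L : Matrix (Fin 2) (Fin 2) ℝ →ₗ[ℝ] (Fin 3 → ℝ),
      ∀ F : Matrix (Fin 2) (Fin 2) ℝ,
        (∀ c : Fin 3 → ℝ,
          Q3 (A⁻¹ * (starExt F + colE3 (L F)) * A⁻¹)
            ≤ Q3 (A⁻¹ * (starExt F + colE3 c) * A⁻¹)) ∧
        (∀ c : Fin 3 → ℝ,
          (∀ c' : Fin 3 → ℝ,
            Q3 (A⁻¹ * (starExt F + colE3 c) * A⁻¹)
              ≤ Q3 (A⁻¹ * (starExt F + colE3 c') * A⁻¹)) →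
          c = L F) := by
  obtain ⟨B, hBsymm, hBQ⟩ := hquad
  have hAinvT : (A⁻¹)ᵀ = A⁻¹ := by
    rw [← conjTranspose_eq_transpose_of_trivial, hA.inv.isHermitian.eq]
  have hAinv : IsUnit A⁻¹ := hA.inv.isUnit
  set S := LinearMap.mulLeftRight ℝ (A⁻¹, A⁻¹)
  have hpos : ∀ c, c ≠ 0 → 0 < B (S (colE3ₗ c)) (S (colE3ₗ c)) := fun c hc => by
    rw [← hBQ]
    refine pos_of_add_transpose_ne_zero hsym hposdef ?_
    rw [LinearMap.mulLeftRight_apply, mul_mul_add_transpose_of_transpose_eq hAinvT,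
      Ne, hAinv.mul_left_eq_zero, hAinv.mul_right_eq_zero]
    exact colE3_add_transpose_ne_zero hc
  obtain ⟨L, hL⟩ := exists_linearMap_unique_minimizer hBsymm (S ∘ₗ colE3ₗ) hpos
  refine ⟨L ∘ₗ S ∘ₗ starExtₗ, fun F => ?_⟩
  have hQ : ∀ c, Q3 (A⁻¹ * (starExt F + colE3 c) * A⁻¹)
      = B (S (starExtₗ F) + S (colE3ₗ c)) (S (starExtₗ F) + S (colE3ₗ c)) := fun c => by
    rw [hBQ, ← map_add]; rfl
  simp only [hQ]
  exact hL (S (starExtₗ F))
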